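/- arXiv:1207.6696 — 5 statements merged into one kernel-verified Lean document; each statement's English description precedes it below -/
import Mathlib

section
/- Let L be a first-order language, A an L-structure, and φ(x̄) a positive Horn formula (built from atoms using conjunction, existential and universal quantification). For any tuple ā of elements of the periodic power A^per, the periodic power satisfies φ(ā) if and only if for every i ∈ ℕ, A satisfies φ(ā(i)), where ā(i) denotes the tuple of i-th components. -/
open FirstOrder FirstOrder.Language FirstOrder.Language.Structure Function

universe u v w

/-- Componentwise structure on a Pi type. -/
instance piStructure {L : Language} {ι : Type*} (M : ι → Type*)
    [∀ i, L.Structure (M i)] : L.Structure (∀ i, M i) where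
  funMap f x i := funMap f fun j => x j i
  RelMap r x := ∀ i, RelMap r fun j => x j i

/-- Componentwise structure on a binary product. -/
instance prodStructure {L : Language} {M N : Type*} [L.Structure M] [L.Structure N] :
    L.Structure (M × N) where
  funMap f x := (funMap f fun i => (x i).1, funMap f fun i => (x i).2)
  RelMap r x := RelMap r (fun i => (x i).1) ∧ RelMap r fun i => (x i).2

/-- `a : ℕ → A` is `k`-periodic: `k > 0` and `a i = a (i % k)` for all `i`. -/
def IsPeriodicWith {A : Type*} (a : ℕ → A) (k : ℕ) : Prop :=
  0 < k ∧ ∀ i, a i = a (i % k)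

/-- `a : ℕ → A` is periodic if it is `k`-periodic for some `k > 0`. -/
def IsPeriodic {A : Type*} (a : ℕ → A) : Prop :=
  ∃ k, IsPeriodicWith a k

theorem isPeriodicWith_of_dvd {A : Type*} {a : ℕ → A} {k m : ℕ}
    (h : IsPeriodicWith a k) (hm : 0 < m) (hd : k ∣ m) : IsPeriodicWith a m :=
  ⟨hm, fun i => by rw [h.2 i, h.2 (i % m), Nat.mod_mod_of_dvd i hd]⟩

/-- The set of periodic functions as a substructure of the direct power `A^ℕ`. -/
def periodicSubstructure (L : Language) (A : Type w) [L.Structure A] :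
    L.Substructure (ℕ → A) where
  carrier := {a | IsPeriodic a}
  fun_mem := by
    intro n f x hx
    choose k hk using hx
    refine ⟨∏ j, k j, Finset.prod_pos fun j _ => (hk j).1, fun i => ?_⟩
    show funMap f (fun j => x j i) = funMap f (fun j => x j (i % ∏ j, k j))
    congr 1
    funext j
    exact (isPeriodicWith_of_dvd (hk j) (Finset.prod_pos fun j _ => (hk j).1)
      (Finset.dvd_prod_of_mem k (Finset.mem_univ j))).2 i

/-- The `k`-periodic sequence `⟨x 0 ⋯ x (k-1)⟩`. -/
def perSeq {A : Type*} (k : ℕ) (hk : 0 < k) (x : Fin k → A) : ℕ → A :=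
  fun i => x ⟨i % k, Nat.mod_lt i hk⟩

theorem perSeq_mem {L : Language} {A : Type w} [L.Structure A]
    (k : ℕ) (hk : 0 < k) (x : Fin k → A) : perSeq k hk x ∈ periodicSubstructure L A :=
  ⟨k, hk, fun i => congrArg x (Fin.ext (Nat.mod_mod_of_dvd i dvd_rfl).symm)⟩

/-- The canonical embedding map `A^k → A^per` on elements. -/
def ekPer {L : Language} {A : Type w} [L.Structure A] (k : ℕ) (hk : 0 < k)
    (x : Fin k → A) : periodicSubstructure L A :=
  ⟨perSeq k hk x, perSeq_mem k hk x⟩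

/-- Positive Horn formulas: built from atomic formulas using `∧`, `∃`, `∀`. -/
inductive IsPositiveHorn {L : Language} {α : Type*} :
    ∀ {n : ℕ}, L.BoundedFormula α n → Prop
  | equal {n} (t₁ t₂ : L.Term (α ⊕ Fin n)) : IsPositiveHorn (t₁.bdEqual t₂)
  | rel {n ℓ} (R : L.Relations ℓ) (ts : Fin ℓ → L.Term (α ⊕ Fin n)) :
      IsPositiveHorn (R.boundedFormula ts)
  | inf {n} {φ ψ : L.BoundedFormula α n} :
      IsPositiveHorn φ → IsPositiveHorn ψ → IsPositiveHorn (φ ⊓ ψ)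
  | ex {n} {φ : L.BoundedFormula α (n + 1)} : IsPositiveHorn φ → IsPositiveHorn φ.ex
  | all {n} {φ : L.BoundedFormula α (n + 1)} : IsPositiveHorn φ → IsPositiveHorn φ.all

/-- Primitive positive formulas: built from atomic formulas using `∧` and `∃`. -/
inductive IsPrimitivePositive {L : Language} {α : Type*} :
    ∀ {n : ℕ}, L.BoundedFormula α n → Prop
  | equal {n} (t₁ t₂ : L.Term (α ⊕ Fin n)) : IsPrimitivePositive (t₁.bdEqual t₂)
  | rel {n ℓ} (R : L.Relations ℓ) (ts : Fin ℓ → L.Term (α ⊕ Fin n)) :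
      IsPrimitivePositive (R.boundedFormula ts)
  | inf {n} {φ ψ : L.BoundedFormula α n} :
      IsPrimitivePositive φ → IsPrimitivePositive ψ → IsPrimitivePositive (φ ⊓ ψ)
  | ex {n} {φ : L.BoundedFormula α (n + 1)} : IsPrimitivePositive φ → IsPrimitivePositive φ.ex

/-- A periomorphism `h` preserves an `ℓ`-ary relation `R` over `A`. -/
def PreservesPer {L : Language} {A : Type w} [L.Structure A] {ℓ : ℕ}
    (h : periodicSubstructure L A →[L] A) (R : Set (Fin ℓ → A)) : Prop :=
  ∀ c : Fin ℓ → periodicSubstructure L A,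
    (∀ i : ℕ, (fun j => (c j : ℕ → A) i) ∈ R) → (fun j => h (c j)) ∈ R

/-- A finitary operation `g : A^k → A` preserves an `ℓ`-ary relation `R` over `A`. -/
def PreservesOp {A : Type*} {k ℓ : ℕ} (g : (Fin k → A) → A) (R : Set (Fin ℓ → A)) : Prop :=
  ∀ a : Fin k → Fin ℓ → A, (∀ i, a i ∈ R) → (fun j => g fun i => a i j) ∈ R

/-- Projection at index `i` is an `L`-homomorphism from the direct power. -/
def projHom {L : Language} {A : Type*} [L.Structure A] (i : ℕ) : (ℕ → A) →[L] A where
  toFun a := a i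
  map_fun' _ _ := rfl
  map_rel' _ _ h := h i

theorem realize_term_component {L : Language} {A : Type*} [L.Structure A] {β : Type*}
    (t : L.Term β) (vs : β → periodicSubstructure L A) (i : ℕ) :
    ((t.realize vs : periodicSubstructure L A) : ℕ → A) i
      = t.realize (fun b => (vs b : ℕ → A) i) :=
  (HomClass.realize_term
    (g := (projHom (L := L) (A := A) i).comp (periodicSubstructure L A).subtype.toHom)
    (t := t) (v := vs)).symm

theorem realize_term_component' {L : Language} {A : Type*} [L.Structure A] {α : Type*}
    {n : ℕ} (t : L.Term (α ⊕ Fin n)) (v : α → periodicSubstructure L A)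
    (xs : Fin n → periodicSubstructure L A) (i : ℕ) :
    ((t.realize (Sum.elim v xs) : periodicSubstructure L A) : ℕ → A) i
      = t.realize (Sum.elim (fun a => (v a : ℕ → A) i) (fun j => (xs j : ℕ → A) i)) := by
  rw [realize_term_component]
  congr 1
  funext b
  cases b <;> rfl

theorem coe_snoc_component {L : Language} {A : Type*} [L.Structure A] {m : ℕ}
    (xs : Fin m → periodicSubstructure L A) (b : periodicSubstructure L A) (i : ℕ) :
    (fun j : Fin (m + 1) =>
        (Fin.snoc (α := fun _ => periodicSubstructure L A) xs b j).val i)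
      = Fin.snoc (fun j => (xs j).val i) (b.val i) := by
  funext j
  refine Fin.lastCases ?_ ?_ j
  · simp
  · intro j'; simp

theorem key_lemma {L : Language} {A : Type*} [L.Structure A] {α : Type*} [Finite α]
    {n : ℕ} {φ : L.BoundedFormula α n} (hφ : IsPositiveHorn φ) :
    ∀ (v : α → periodicSubstructure L A) (xs : Fin n → periodicSubstructure L A),
      φ.Realize v xs ↔
        ∀ i : ℕ, φ.Realize (fun a => (v a : ℕ → A) i) (fun j => (xs j : ℕ → A) i) := by
  have : Fintype α := Fintype.ofFinite α
  induction hφ with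
  | equal t₁ t₂ =>
    intro v xs
    simp only [BoundedFormula.realize_bdEqual]
    rw [Subtype.ext_iff, funext_iff]
    exact forall_congr' fun i => by
      rw [realize_term_component', realize_term_component']
  | rel R ts =>
    intro v xs
    simp only [BoundedFormula.realize_rel]
    show (∀ i : ℕ, RelMap R fun j =>
        ((Term.realize (Sum.elim v xs) (ts j) : periodicSubstructure L A) : ℕ → A) i) ↔ _
    exact forall_congr' fun i => iff_of_eq (congrArg _
      (funext fun j => realize_term_component' (ts j) v xs i))
  | inf _ _ ih₁ ih₂ =>
    intro v xs
    simp only [BoundedFormula.realize_inf, ih₁ v xs, ih₂ v xs, forall_and]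
  | @ex m ψ _ ih =>
    intro v xs
    simp only [BoundedFormula.realize_ex]
    constructor
    · rintro ⟨b, hb⟩ i
      refine ⟨(b : ℕ → A) i, ?_⟩
      have := (ih v (Fin.snoc xs b)).mp hb i
      rwa [coe_snoc_component] at this
    · intro h
      choose k hk using fun b : α ⊕ Fin m => (Sum.elim v xs b).2
      set K : ℕ := ∏ b, k b with hK
      have hKpos : 0 < K := Finset.prod_pos fun b _ => (hk b).1
      have hper : ∀ b i, (Sum.elim v xs b).val i = (Sum.elim v xs b).val (i % K) :=
        fun b => (isPeriodicWith_of_dvd (hk b) hKpos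
          (Finset.dvd_prod_of_mem k (Finset.mem_univ b))).2
      choose w hw using h
      have hbper : (fun i => w (i % K)) ∈ periodicSubstructure L A :=
        ⟨K, hKpos, fun i => by
          show w (i % K) = w (i % K % K)
          rw [Nat.mod_mod_of_dvd i dvd_rfl]⟩
      refine ⟨⟨fun i => w (i % K), hbper⟩, (ih v (Fin.snoc xs ⟨_, hbper⟩)).mpr fun i => ?_⟩
      rw [coe_snoc_component]
      have hv : (fun a => (v a).val i) = fun a => (v a).val (i % K) :=
        funext fun a => hper (Sum.inl a) i
      have hx : (fun j => (xs j).val i) = fun j => (xs j).val (i % K) :=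
        funext fun j => hper (Sum.inr j) i
      rw [hv, hx]
      exact hw (i % K)
  | @all m ψ _ ih =>
    intro v xs
    simp only [BoundedFormula.realize_all]
    constructor
    · intro h i b'
      have hconst : (fun _ : ℕ => b') ∈ periodicSubstructure L A :=
        ⟨1, Nat.one_pos, fun _ => rfl⟩
      have := (ih v (Fin.snoc xs ⟨fun _ => b', hconst⟩)).mp (h ⟨fun _ => b', hconst⟩) i
      rwa [coe_snoc_component] at this
    · intro h b
      refine (ih v (Fin.snoc xs b)).mpr fun i => ?_
      rw [coe_snoc_component]
      exact h i ((b : ℕ → A) i)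

/-- a positive Horn formula holds of a tuple in the periodic power iff it
holds componentwise in `A`. -/
theorem stmt_4 {L : Language} {A : Type*} [L.Structure A] {α : Type*} [Finite α]
    (φ : L.Formula α) (hφ : IsPositiveHorn φ) (v : α → periodicSubstructure L A) :
    φ.Realize v ↔ ∀ i : ℕ, φ.Realize (fun x => (v x : ℕ → A) i) := by
  have := key_lemma hφ v default
  simp only [Formula.Realize]
  rw [this]
  exact forall_congr' fun i => iff_of_eq (congrArg _ (Subsingleton.elim _ _))
end

section
/- For every structure A and every tuple ā from A (identified with constant sequences in A^per) and every positive Horn formula φ(x̄): A satisfies φ(ā) if and only if A^per satisfies φ(ā) if and only if A^ℕ satisfies φ(ā). In other words, A ⪯_pH A^per ⪯_pH A^ℕ. -/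
open FirstOrder FirstOrder.Language FirstOrder.Language.Structure Function

universe u v w

section Aux

variable {L : Language} {A : Type*} [L.Structure A]

theorem term_realize_pi' {β : Type*} (t : L.Term β) (v : β → ℕ → A) (i : ℕ) :
    t.realize v i = t.realize (fun b => v b i) := by
  induction t with
  | var b => rfl
  | func f ts ih =>
    show funMap f (fun j => (ts j).realize v i) = funMap f fun j => (ts j).realize fun b => v b i
    exact congrArg (funMap f) (funext ih)

theorem snoc_eval' {B C : Type*} {n : ℕ} (xs : Fin n → B) (b : B) (f : B → C) :
    (fun a => f ((Fin.snoc xs b : Fin (n + 1) → B) a)) = Fin.snoc (fun j => f (xs j)) (f b) := by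
  funext a
  induction a using Fin.lastCases with
  | last => simp
  | cast j => simp

theorem term_realize_per' {β : Type*} (t : L.Term β)
    (v : β → periodicSubstructure L A) (i : ℕ) :
    ((t.realize v : periodicSubstructure L A) : ℕ → A) i
      = t.realize (fun b => (v b : ℕ → A) i) := by
  have h : ((t.realize v : periodicSubstructure L A) : ℕ → A)
      = t.realize (fun b => (v b : ℕ → A)) :=
    (HomClass.realize_term (periodicSubstructure L A).subtype (t := t) (v := v)).symm
  rw [h, term_realize_pi']

/-- The constant sequence as an element of the periodic power. -/
def constPer' (c : A) : periodicSubstructure L A :=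
  ⟨fun _ => c, 1, one_pos, fun _ => rfl⟩

theorem common_period' {β : Type*} [Finite β] (v : β → periodicSubstructure L A) :
    ∃ K, 0 < K ∧ ∀ (b : β) (i : ℕ), (v b : ℕ → A) i = (v b : ℕ → A) (i % K) := by
  have := Fintype.ofFinite β
  choose k hk using fun b => (v b).2
  have hpos : 0 < ∏ b, k b := Finset.prod_pos fun b _ => (hk b).1
  exact ⟨∏ b, k b, hpos, fun b i =>
    (isPeriodicWith_of_dvd (hk b) hpos (Finset.dvd_prod_of_mem k (Finset.mem_univ b))).2 i⟩

/-- Positive Horn formulas are realized componentwise in the full power `A^ℕ`. -/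
theorem realize_pi_iff' {α : Type*} :
    ∀ {n : ℕ} {φ : L.BoundedFormula α n}, IsPositiveHorn φ →
      ∀ (v : α → ℕ → A) (xs : Fin n → ℕ → A),
        (φ.Realize v xs ↔ ∀ i : ℕ, φ.Realize (fun a => v a i) (fun a => xs a i)) := by
  intro n φ hφ
  induction hφ with
  | equal t₁ t₂ =>
    intro v xs
    simp only [BoundedFormula.realize_bdEqual]
    rw [funext_iff]
    refine forall_congr' fun i => ?_
    rw [term_realize_pi', term_realize_pi']
    have : (fun b => Sum.elim v xs b i)
        = Sum.elim (fun a => v a i) (fun a => xs a i) := by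
      funext b; cases b <;> rfl
    rw [this]
  | rel R ts =>
    intro v xs
    simp only [BoundedFormula.realize_rel]
    show (∀ i, RelMap R fun j => (ts j).realize (Sum.elim v xs) i) ↔ _
    refine forall_congr' fun i => ?_
    have : (fun j => (ts j).realize (Sum.elim v xs) i)
        = fun j => (ts j).realize (Sum.elim (fun a => v a i) (fun a => xs a i)) := by
      funext j
      rw [term_realize_pi']
      congr 1
      funext b; cases b <;> rfl
    rw [this]
  | inf _ _ ih₁ ih₂ =>
    intro v xs
    simp only [BoundedFormula.realize_inf, ih₁ v xs, ih₂ v xs]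
    exact ⟨fun ⟨h₁, h₂⟩ i => ⟨h₁ i, h₂ i⟩, fun h => ⟨fun i => (h i).1, fun i => (h i).2⟩⟩
  | ex _ ih =>
    intro v xs
    simp only [BoundedFormula.realize_ex]
    constructor
    · rintro ⟨b, hb⟩ i
      have := (ih v (Fin.snoc xs b)).1 hb i
      rw [snoc_eval' xs b (fun g => g i)] at this
      exact ⟨b i, this⟩
    · intro h
      choose c hc using h
      refine ⟨fun i => c i, (ih v (Fin.snoc xs fun i => c i)).2 fun i => ?_⟩
      rw [snoc_eval' xs (fun i => c i) (fun g => g i)]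
      exact hc i
  | all _ ih =>
    intro v xs
    simp only [BoundedFormula.realize_all]
    constructor
    · intro h i
      refine fun c => ?_
      have := (ih v (Fin.snoc xs fun _ => c)).1 (h fun _ => c) i
      rwa [snoc_eval' xs (fun _ => c) (fun g => g i)] at this
    · intro h b
      refine (ih v (Fin.snoc xs b)).2 fun i => ?_
      rw [snoc_eval' xs b (fun g => g i)]
      exact h i (b i)
      
/-- Positive Horn formulas are realized componentwise in the periodic power. -/
theorem realize_per_iff' {α : Type*} [Finite α] :
    ∀ {n : ℕ} {φ : L.BoundedFormula α n}, IsPositiveHorn φ →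
      ∀ (v : α → periodicSubstructure L A) (xs : Fin n → periodicSubstructure L A),
        (φ.Realize v xs ↔
          ∀ i : ℕ, φ.Realize (fun a => (v a : ℕ → A) i) (fun a => (xs a : ℕ → A) i)) := by
  intro n φ hφ
  induction hφ with
  | equal t₁ t₂ =>
    intro v xs
    simp only [BoundedFormula.realize_bdEqual]
    rw [Subtype.ext_iff, funext_iff]
    refine forall_congr' fun i => ?_
    rw [term_realize_per', term_realize_per']
    have : (fun b => ((Sum.elim v xs b : periodicSubstructure L A) : ℕ → A) i)
        = Sum.elim (fun a => (v a : ℕ → A) i) (fun a => (xs a : ℕ → A) i) := by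
      funext b; cases b <;> rfl
    rw [this]
  | rel R ts =>
    intro v xs
    simp only [BoundedFormula.realize_rel]
    show (∀ i, RelMap R fun j =>
        (((ts j).realize (Sum.elim v xs) : periodicSubstructure L A) : ℕ → A) i) ↔ _
    refine forall_congr' fun i => ?_
    have : (fun j => (((ts j).realize (Sum.elim v xs) : periodicSubstructure L A) : ℕ → A) i)
        = fun j => (ts j).realize
            (Sum.elim (fun a => (v a : ℕ → A) i) (fun a => (xs a : ℕ → A) i)) := by
      funext j
      rw [term_realize_per']
      congr 1
      funext b; cases b <;> rfl
    rw [this]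
  | inf _ _ ih₁ ih₂ =>
    intro v xs
    simp only [BoundedFormula.realize_inf, ih₁ v xs, ih₂ v xs]
    exact ⟨fun ⟨h₁, h₂⟩ i => ⟨h₁ i, h₂ i⟩, fun h => ⟨fun i => (h i).1, fun i => (h i).2⟩⟩
  | ex _ ih =>
    intro v xs
    simp only [BoundedFormula.realize_ex]
    constructor
    · rintro ⟨b, hb⟩ i
      have := (ih v (Fin.snoc xs b)).1 hb i
      rw [snoc_eval' xs b (fun g => (g : ℕ → A) i)] at this
      exact ⟨(b : ℕ → A) i, this⟩
    · intro h
      choose c hc using h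
      obtain ⟨K, hK, hper⟩ := common_period' (Sum.elim v xs)
      refine ⟨⟨fun i => c (i % K), K, hK, fun i => by
        simp [Nat.mod_mod_of_dvd i (dvd_refl K)]⟩, ?_⟩
      refine (ih v (Fin.snoc xs _)).2 fun i => ?_
      rw [snoc_eval' xs _ (fun g => (g : ℕ → A) i)]
      have key := hc (i % K)
      have e1 : (fun a => (v a : ℕ → A) (i % K)) = fun a => (v a : ℕ → A) i := by
        funext a; exact (hper (Sum.inl a) i).symm
      have e2 : Fin.snoc (α := fun _ => A) (fun j => (xs j : ℕ → A) (i % K)) (c (i % K))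
          = Fin.snoc (α := fun _ => A) (fun j => (xs j : ℕ → A) i) (c (i % K)) := by
        funext j
        induction j using Fin.lastCases with
        | last => simp
        | cast j => simpa using (hper (Sum.inr j) i).symm
      rw [e1, e2] at key
      exact key
  | all _ ih =>
    intro v xs
    simp only [BoundedFormula.realize_all]
    constructor
    · intro h i c
      have := (ih v (Fin.snoc xs (constPer' c))).1 (h (constPer' c)) i
      rwa [snoc_eval' xs (constPer' c) (fun g => (g : ℕ → A) i)] at this
    · intro h b
      refine (ih v (Fin.snoc xs b)).2 fun i => ?_
      rw [snoc_eval' xs b (fun g => (g : ℕ → A) i)]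
      exact h i ((b : ℕ → A) i)

end Aux

/-- `A ⪯_pH A^per ⪯_pH A^ℕ`: positive Horn formulas transfer between `A`
(via constant sequences) and `A^per`, and between `A^per` and `A^ℕ`. -/
theorem stmt_8 {L : Language} {A : Type*} [L.Structure A] {α : Type*} [Finite α]
    (φ : L.Formula α) (hφ : IsPositiveHorn φ) :
    (∀ (v : α → A) (w : α → periodicSubstructure L A),
        (∀ (x : α) (i : ℕ), (w x : ℕ → A) i = v x) → (φ.Realize v ↔ φ.Realize w)) ∧
    (∀ w : α → periodicSubstructure L A,
        φ.Realize w ↔ φ.Realize (fun x => (w x : ℕ → A))) := by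
  constructor
  · intro v w hw
    have hc : ∀ i : ℕ, (fun a => (w a : ℕ → A) i) = v := fun i => funext fun a => hw a i
    rw [Formula.Realize, Formula.Realize, realize_per_iff' hφ w default]
    have he : ∀ i : ℕ, (fun a => ((default : Fin 0 → periodicSubstructure L A) a : ℕ → A) i)
        = (default : Fin 0 → A) := fun i => funext fun a => a.elim0
    constructor
    · intro h i; rw [hc i, he i]; exact h
    · intro h; have h0 := h 0; rwa [hc 0, he 0] at h0
  · intro w
    rw [Formula.Realize, Formula.Realize, realize_per_iff' hφ w default,
      realize_pi_iff' hφ (fun x => (w x : ℕ → A)) default]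
    exact forall_congr' fun i =>
      iff_of_eq (congrArg (BoundedFormula.Realize φ _) (funext fun a => a.elim0))
end

section
/- For every structure A and every k > 1, the periodic power A^per is isomorphic to the k-th direct power (A^per)^k of itself. -/
open FirstOrder FirstOrder.Language FirstOrder.Language.Structure Function

universe u v w

/-!
Reading a sequence `a : ℕ → A` along the residue classes modulo `k` gives the isomorphism
`A^ℕ ≅ (A^ℕ)^k`, `a ↦ (j ↦ (i ↦ a (i * k + j)))`, of direct powers; operations and relations
act pointwise, so it is an isomorphism of structures. It restricts to the periodic parts: if `a`
has period `p`, so does each `i ↦ a (i * k + j)`, and if the `k` subsequences share the period `p`,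
their interleaving has period `k * p`.
-/

section Deinterleave

variable {A : Type*} (k : ℕ) [NeZero k]

def deinterleave : (ℕ → A) ≃ (Fin k → ℕ → A) :=
  ((Nat.divModEquiv k).arrowCongr (Equiv.refl A)).trans
    ((Equiv.curry _ _ _).trans (Equiv.piComm _))

theorem deinterleave_symm_apply (b : Fin k → ℕ → A) (n : ℕ) :
    (deinterleave k).symm b n = b (Fin.ofNat k n) (n / k) := rfl

end Deinterleave

section Periodic

variable {A : Type*}

theorem IsPeriodicWith.apply_eq_of_mod_eq {a : ℕ → A} {p m n : ℕ} (h : IsPeriodicWith a p)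
    (hmn : m % p = n % p) : a m = a n := by
  rw [h.2 m, h.2 n, hmn]

theorem IsPeriodicWith.comp_mul_add {a : ℕ → A} {p : ℕ} (h : IsPeriodicWith a p) (k j : ℕ) :
    IsPeriodicWith (fun i => a (i * k + j)) p :=
  ⟨h.1, fun i => h.apply_eq_of_mod_eq (((Nat.mod_modEq i p).mul_right k).add_right j).symm⟩

theorem exists_isPeriodicWith_forall {ι : Type*} [Fintype ι] {b : ι → ℕ → A}
    (h : ∀ j, IsPeriodic (b j)) : ∃ p, ∀ j, IsPeriodicWith (b j) p := by
  choose p hp using h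
  have hpos : 0 < ∏ j, p j := Finset.prod_pos fun j _ => (hp j).1
  exact ⟨∏ j, p j, fun j =>
    isPeriodicWith_of_dvd (hp j) hpos (Finset.dvd_prod_of_mem p (Finset.mem_univ j))⟩

theorem IsPeriodicWith.deinterleave_symm {k p : ℕ} [NeZero k] {b : Fin k → ℕ → A}
    (h : ∀ j, IsPeriodicWith (b j) p) : IsPeriodicWith ((deinterleave k).symm b) (k * p) := by
  refine ⟨Nat.mul_pos (NeZero.pos k) (h 0).1, fun n => ?_⟩
  have hj : Fin.ofNat k (n % (k * p)) = Fin.ofNat k n := Fin.ext (Nat.mod_mul_right_mod n k p)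
  simp only [deinterleave_symm_apply, hj, Nat.mod_mul_right_div_self]
  exact (h _).2 _

theorem isPeriodic_iff_forall_deinterleave (k : ℕ) [NeZero k] {a : ℕ → A} :
    IsPeriodic a ↔ ∀ j, IsPeriodic (deinterleave k a j) := by
  refine ⟨fun ⟨p, hp⟩ j => ⟨p, hp.comp_mul_add k j⟩, fun h => ?_⟩
  obtain ⟨p, hp⟩ := exists_isPeriodicWith_forall h
  exact ⟨k * p, (deinterleave k).symm_apply_apply a ▸ IsPeriodicWith.deinterleave_symm hp⟩

end Periodic

def periodicSubstructureEquivPi (L : Language) (A : Type*) [L.Structure A] (k : ℕ) [NeZero k] :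
    periodicSubstructure L A ≃[L] (Fin k → periodicSubstructure L A) where
  toEquiv := ((deinterleave k).subtypeEquiv fun _ => isPeriodic_iff_forall_deinterleave k).trans
    Equiv.subtypePiEquivPi
  map_fun' _ _ := rfl
  map_rel' r x := by
    let R : ℕ → Prop := fun n => RelMap r fun t => (x t : ℕ → A) n
    show (∀ (j : Fin k) (i : ℕ), R (i * k + j)) ↔ ∀ n, R n
    rw [forall_comm]
    exact Prod.forall'.symm.trans ((Nat.divModEquiv k).symm.forall_congr_right (q := R))

/-- for `k > 1`, `A^per ≅ (A^per)^k`. -/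
theorem stmt_11 {L : Language} {A : Type*} [L.Structure A] (k : ℕ) (hk : 1 < k) :
    Nonempty (periodicSubstructure L A ≃[L] (Fin k → periodicSubstructure L A)) :=
  have : NeZero k := ⟨by omega⟩
  ⟨periodicSubstructureEquivPi L A k⟩
end

section
/- Every positive Horn formula is preserved by all surjective periomorphisms of a structure A: if h : A^per → A is a surjective homomorphism, φ(x̄) a positive Horn formula, and ā_0, ..., ā_{ℓ-1} ∈ A^per are periodic sequences with (ā_0(i), ..., ā_{ℓ-1}(i)) ∈ φ(A) for all i ∈ ℕ, then (h(ā_0), ..., h(ā_{ℓ-1})) ∈ φ(A). -/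
open FirstOrder FirstOrder.Language FirstOrder.Language.Structure Function

universe u v w

/-! Positive Horn formulas hold in `A^per` as soon as they hold at every coordinate: conjunctions,
universal quantifiers and atoms are checked coordinatewise, and for an existential quantifier the
coordinatewise witnesses can be chosen periodic, because the parameters have a common period `K`
and the witness at coordinate `i` may be taken to be the one at `i % K`. A surjective homomorphism
`A^per → A` then transports the formula to `A`, since it preserves atoms and `∃`, and surjectivity
lets every element of `A` be lifted when checking `∀`. -/

namespace FirstOrder.Language

variable {L : Language}

section Periodic

variable {A : Type w} [L.Structure A]

def periodicEval (i : ℕ) : periodicSubstructure L A →[L] A where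
  toFun a := (a : ℕ → A) i
  map_fun' _ _ := rfl
  map_rel' _ _ h := h i

theorem periodicSubstructure_ext {a b : periodicSubstructure L A}
    (h : ∀ i, periodicEval i a = periodicEval i b) : a = b :=
  Subtype.ext (funext h)

theorem relMap_of_forall_relMap_periodicEval {n : ℕ} {R : L.Relations n}
    {x : Fin n → periodicSubstructure L A}
    (h : ∀ i, RelMap R (periodicEval i ∘ x)) : RelMap R x :=
  h

theorem exists_common_period {ι : Type*} [Finite ι] (c : ι → periodicSubstructure L A) :
    ∃ K, 0 < K ∧ ∀ j, IsPeriodicWith (c j : ℕ → A) K := by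
  cases nonempty_fintype ι
  choose k hk using fun j => (c j).2
  have hpos : 0 < ∏ j, k j := Finset.prod_pos fun j _ => (hk j).1
  exact ⟨∏ j, k j, hpos, fun j =>
    isPeriodicWith_of_dvd (hk j) hpos (Finset.dvd_prod_of_mem k (Finset.mem_univ j))⟩

theorem periodicEval_mod_comp {ι : Type*} {c : ι → periodicSubstructure L A} {K : ℕ}
    (hK : ∀ j, IsPeriodicWith (c j : ℕ → A) K) (i : ℕ) :
    periodicEval (i % K) ∘ c = periodicEval i ∘ c :=
  funext fun j => ((hK j).2 i).symm

theorem IsPositiveHorn.realize_of_forall_realize_periodicEval {α : Type*} [Finite α]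
    {n : ℕ} {φ : L.BoundedFormula α n} (hφ : IsPositiveHorn φ)
    (v : α → periodicSubstructure L A) (xs : Fin n → periodicSubstructure L A)
    (h : ∀ i, φ.Realize (periodicEval i ∘ v) (periodicEval i ∘ xs)) : φ.Realize v xs := by
  induction hφ with
  | equal t₁ t₂ =>
    refine periodicSubstructure_ext fun i => ?_
    have hi := h i
    rwa [BoundedFormula.realize_bdEqual, ← Sum.comp_elim, HomClass.realize_term,
      HomClass.realize_term] at hi
  | rel R ts =>
    refine relMap_of_forall_relMap_periodicEval fun i => ?_
    have hi := h i
    rw [BoundedFormula.realize_rel, ← Sum.comp_elim] at hi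
    simp only [HomClass.realize_term] at hi
    exact hi
  | inf _ _ ih₁ ih₂ =>
    simp only [BoundedFormula.realize_inf] at h ⊢
    exact ⟨ih₁ xs fun i => (h i).1, ih₂ xs fun i => (h i).2⟩
  | ex _ ih =>
    simp only [BoundedFormula.realize_ex] at h ⊢
    obtain ⟨K, hK, hper⟩ := exists_common_period (Sum.elim v xs)
    choose w hw using h
    let b : periodicSubstructure L A :=
      ⟨fun i => w (i % K), K, hK, fun i => congrArg w (Nat.mod_mod i K).symm⟩
    refine ⟨b, ih (Fin.snoc xs b) fun i => ?_⟩
    have hv : periodicEval (i % K) ∘ v = periodicEval i ∘ v :=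
      periodicEval_mod_comp (fun a => hper (.inl a)) i
    have hxs : periodicEval (i % K) ∘ xs = periodicEval i ∘ xs :=
      periodicEval_mod_comp (fun j => hper (.inr j)) i
    rw [Fin.comp_snoc, ← hv, ← hxs]
    exact hw (i % K)
  | all _ ih =>
    simp only [BoundedFormula.realize_all] at h ⊢
    intro c
    exact ih (Fin.snoc xs c) fun i => by rw [Fin.comp_snoc]; exact h i (periodicEval i c)

end Periodic

theorem IsPositiveHorn.realize_comp_of_surjective {M N : Type*} [L.Structure M] [L.Structure N]
    {g : M →[L] N} (hg : Surjective g) {α : Type*} {n : ℕ} {φ : L.BoundedFormula α n}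
    (hφ : IsPositiveHorn φ) {v : α → M} {xs : Fin n → M} (h : φ.Realize v xs) :
    φ.Realize (g ∘ v) (g ∘ xs) := by
  induction hφ with
  | equal t₁ t₂ =>
    simp only [BoundedFormula.realize_bdEqual, ← Sum.comp_elim, HomClass.realize_term] at h ⊢
    rw [h]
  | rel R ts =>
    rw [BoundedFormula.realize_rel, ← Sum.comp_elim]
    simp only [HomClass.realize_term]
    exact g.map_rel R _ h
  | inf _ _ ih₁ ih₂ =>
    rw [BoundedFormula.realize_inf] at h ⊢
    exact ⟨ih₁ h.1, ih₂ h.2⟩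
  | ex _ ih =>
    rw [BoundedFormula.realize_ex] at h ⊢
    obtain ⟨a, ha⟩ := h
    exact ⟨g a, by rw [← Fin.comp_snoc]; exact ih ha⟩
  | all _ ih =>
    rw [BoundedFormula.realize_all] at h ⊢
    intro c
    obtain ⟨a, rfl⟩ := hg c
    rw [← Fin.comp_snoc]
    exact ih (h a)

end FirstOrder.Language

/-- every positive Horn formula is preserved by all surjective
periomorphisms of `A`. -/
theorem stmt_13 {L : Language} {A : Type*} [L.Structure A] {ℓ : ℕ}
    (φ : L.Formula (Fin ℓ)) (hφ : IsPositiveHorn φ)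
    (h : periodicSubstructure L A →[L] A) (hsurj : Surjective h)
    (v : Fin ℓ → periodicSubstructure L A)
    (hv : ∀ i : ℕ, φ.Realize (fun j => (v j : ℕ → A) i)) :
    φ.Realize (fun j => h (v j)) := by
  have hper : φ.Realize v :=
    hφ.realize_of_forall_realize_periodicEval v default fun i => by
      rw [Unique.eq_default (periodicEval i ∘ default)]
      exact hv i
  have hA := hφ.realize_comp_of_surjective hsurj hper
  rwa [Unique.eq_default (h ∘ default)] at hA
end

section
/- Let A be an equality template (a relational structure on a countably infinite set all of whose relations are first-order definable from equality alone). Either A has a constant polymorphism, or the disequality relation ≠ is primitive positively definable in A. -/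
open FirstOrder FirstOrder.Language FirstOrder.Language.Structure Function

universe u v w

/-!
If every nonempty relation of `A` contains a constant tuple, then by permutation invariance it
contains every constant tuple, so any constant map is a polymorphism. Otherwise some nonempty
relation `R` contains no constant tuple; pick `x ∈ R` with the fewest distinct entries and two
entries `x i ≠ x j`. The primitive positive formula stating that some tuple of `R` has the
equality pattern of `x`, with the class of `x i` placed at `v 0` and that of `x j` at `v 1`,
defines `v 0 ≠ v 1`: if `v 0 = v 1` the witness tuple has fewer distinct entries than `x`, and if
`v 0 ≠ v 1` a permutation mapping `x i, x j` to `v 0, v 1` moves `x` to a witness.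
-/

theorem IsPrimitivePositive.exs {L : Language} {α : Type*} {n : ℕ} {φ : L.BoundedFormula α n}
    (h : IsPrimitivePositive φ) : IsPrimitivePositive φ.exs := by
  induction n with
  | zero => exact h
  | succ n ih => exact ih h.ex

theorem Set.ncard_range_comp_lt {ι α β : Type*} [Finite ι] {x : ι → α} (g : α → β) {i j : ι}
    (hne : x i ≠ x j) (heq : g (x i) = g (x j)) :
    (Set.range (g ∘ x)).ncard < (Set.range x).ncard := by
  rw [Set.range_comp]
  refine lt_of_le_of_ne (Set.ncard_image_le (Set.finite_range x)) fun h => hne ?_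
  exact Set.injOn_of_ncard_image_eq h (Set.finite_range x) (Set.mem_range_self i)
    (Set.mem_range_self j) heq

section EqualityTemplate

variable {L : Language} {A : Type*}

theorem exists_constHom_of_forall_exists_const [L.Structure A] [L.IsRelational]
    (hinv : ∀ (n : ℕ) (r : L.Relations n) (σ : Equiv.Perm A) (x : Fin n → A),
      RelMap r (σ ∘ x) ↔ RelMap r x)
    (hconst : ∀ (n : ℕ) (r : L.Relations n),
      (∃ x : Fin n → A, RelMap r x) → ∃ d : A, RelMap r fun _ => d)
    (c : A) : ∃ h : A →[L] A, ∀ a, h a = c := by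
  classical
  refine ⟨⟨fun _ => c, fun f => isEmptyElim f, fun {n} r x hx => ?_⟩, fun _ => rfl⟩
  obtain ⟨d, hd⟩ := hconst n r ⟨x, hx⟩
  simpa [Function.comp_def] using (hinv n r (Equiv.swap d c) fun _ => d).2 hd

variable {n : ℕ}

open Classical in
/-- The variable standing for a value `c` of `x` in `patternFormula`: free variable `0` for `a`,
free variable `1` for `b`, and otherwise a bound variable at which `x` takes the value `c`. -/
noncomputable def patternVar (x : Fin n → A) (a b c : A) : Fin 2 ⊕ Fin n :=
  if c = a then .inl 0 else if c = b then .inl 1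
  else if h : ∃ i, x i = c then .inr h.choose else .inl 0

noncomputable def patternFormula (r : L.Relations n) (x : Fin n → A) (a b : A) :
    L.Formula (Fin 2) :=
  (r.boundedFormula fun i => Term.var (patternVar x a b (x i))).exs

theorem isPrimitivePositive_patternFormula (r : L.Relations n) (x : Fin n → A) (a b : A) :
    IsPrimitivePositive (patternFormula r x a b) :=
  (IsPrimitivePositive.rel r _).exs

variable [L.Structure A]

theorem realize_patternFormula {r : L.Relations n} {x : Fin n → A} {a b : A} {v : Fin 2 → A} :
    (patternFormula r x a b).Realize v ↔
      ∃ zs : Fin n → A, RelMap r (Sum.elim v zs ∘ patternVar x a b ∘ x) := by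
  rw [patternFormula, BoundedFormula.realize_exs]
  simp only [BoundedFormula.realize_rel, Term.realize_var]
  rfl

theorem ne_of_realize_patternFormula {r : L.Relations n} {x : Fin n → A}
    (hmin : ∀ y : Fin n → A, RelMap r y → ¬(Set.range y).ncard < (Set.range x).ncard)
    {i j : Fin n} (hij : x i ≠ x j) {v : Fin 2 → A}
    (hv : (patternFormula r x (x i) (x j)).Realize v) : v 0 ≠ v 1 := by
  intro hv01
  obtain ⟨zs, hzs⟩ := realize_patternFormula.1 hv
  refine hmin _ hzs (Set.ncard_range_comp_lt (Sum.elim v zs ∘ patternVar x (x i) (x j)) hij ?_)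
  simp [patternVar, hij.symm, hv01]

theorem realize_patternFormula_of_ne {r : L.Relations n}
    (hinv : ∀ (σ : Equiv.Perm A) (x : Fin n → A), RelMap r (σ ∘ x) ↔ RelMap r x)
    {x : Fin n → A} (hx : RelMap r x) {a b : A} (hab : a ≠ b) {v : Fin 2 → A} (hv : v 0 ≠ v 1) :
    (patternFormula r x a b).Realize v := by
  obtain ⟨σ, hσa, hσb⟩ :=
    MulAction.is_two_pretransitive_iff.1 (Equiv.Perm.isMultiplyPretransitive A 2) hab hv
  refine realize_patternFormula.2 ⟨σ ∘ x, ?_⟩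
  convert (hinv σ x).2 hx using 1
  funext k
  simp only [Function.comp_apply, patternVar]
  split_ifs with ha hb hk
  · simpa [ha] using hσa.symm
  · simpa [hb] using hσb.symm
  · simp [hk.choose_spec]
  · exact absurd ⟨k, rfl⟩ hk

theorem exists_isPrimitivePositive_ne [Nonempty A] {r : L.Relations n}
    (hinv : ∀ (σ : Equiv.Perm A) (x : Fin n → A), RelMap r (σ ∘ x) ↔ RelMap r x)
    (hr : ∃ x : Fin n → A, RelMap r x) (hnc : ∀ d : A, ¬RelMap r fun _ => d) :
    ∃ φ : L.Formula (Fin 2), IsPrimitivePositive φ ∧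
      ∀ v : Fin 2 → A, φ.Realize v ↔ v 0 ≠ v 1 := by
  obtain ⟨x, hx, hmin⟩ :=
    (measure fun y : Fin n → A => (Set.range y).ncard).wf.has_min {y | RelMap r y} hr
  obtain ⟨i, j, hij⟩ : ∃ i j, x i ≠ x j := by
    by_contra! hconst
    obtain ⟨d, rfl⟩ : ∃ d, x = fun _ => d := by
      rcases isEmpty_or_nonempty (Fin n) with _ | ⟨⟨k⟩⟩
      · exact ⟨Classical.arbitrary A, Subsingleton.elim _ _⟩
      · exact ⟨x k, funext fun i => hconst i k⟩
    exact hnc d hx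
  exact ⟨patternFormula r x (x i) (x j), isPrimitivePositive_patternFormula r x _ _, fun v =>
    ⟨ne_of_realize_patternFormula hmin hij, realize_patternFormula_of_ne hinv hx hij⟩⟩

end EqualityTemplate

theorem stmt_19_general {L : Language} [L.IsRelational] {A : Type} [L.Structure A]
    [Infinite A]
    (hinv : ∀ (n : ℕ) (r : L.Relations n) (σ : Equiv.Perm A) (x : Fin n → A),
      RelMap r (σ ∘ x) ↔ RelMap r x) :
    (∃ (c : A) (h : A →[L] A), ∀ a, h a = c) ∨
    (∃ φ : L.Formula (Fin 2), IsPrimitivePositive φ ∧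
      ∀ x : Fin 2 → A, φ.Realize x ↔ x 0 ≠ x 1) := by
  by_cases hconst : ∀ (n : ℕ) (r : L.Relations n),
      (∃ x : Fin n → A, RelMap r x) → ∃ d : A, RelMap r fun _ => d
  · exact .inl ⟨Classical.arbitrary A, exists_constHom_of_forall_exists_const hinv hconst _⟩
  · push Not at hconst
    obtain ⟨n, r, hr, hnc⟩ := hconst
    exact .inr (exists_isPrimitivePositive_ne (hinv n r) hr hnc)

/-- for an equality template `A` (a relational structure on a countably
infinite set whose relations are invariant under all permutations of the universe),
either `A` has a constant polymorphism, or `≠` is primitive positively definable. -/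
theorem stmt_19 {L : Language} [L.IsRelational] {A : Type} [L.Structure A]
    [Countable A] [Infinite A]
    (hinv : ∀ (n : ℕ) (r : L.Relations n) (σ : Equiv.Perm A) (x : Fin n → A),
      RelMap r (σ ∘ x) ↔ RelMap r x) :
    (∃ (c : A) (h : A →[L] A), ∀ a, h a = c) ∨
    (∃ φ : L.Formula (Fin 2), IsPrimitivePositive φ ∧
      ∀ x : Fin 2 → A, φ.Realize x ↔ x 0 ≠ x 1) :=
  stmt_19_general hinv
end
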